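/- arXiv:1705.00289 — 2 statements merged into one kernel-verified Lean document; each statement's English description precedes it below -/
import Mathlib

section
/- The Laplace transform of the density f_Θ(θ) = λ^α (θ−λ)^{-α}/(θ Γ(1−α)Γ(α)) on θ ∈ (λ,∞) is L_Θ(s) = Γ(α, λs)/Γ(α), where Γ(α,x) = ∫_x^∞ t^{α-1} e^{-t} dt is the upper incomplete gamma function. -/
/-!
Writing `e^{-sθ}/θ = ∫_s^∞ e^{-θv} dv` and exchanging the order of integration (the integrand is
nonnegative), the inner integral `∫_λ^∞ (θ-λ)^{-α} e^{-vθ} dθ = Γ(1-α) v^{α-1} e^{-λv}` is a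
translated Gamma integral, and the substitution `t = λv` turns `∫_s^∞ v^{α-1} e^{-λv} dv` into
`λ^{-α} Γ(α, λs)`.
-/

open MeasureTheory Real Set

section Translation

variable {E : Type*} [NormedAddCommGroup E]

theorem integral_Ioi_comp_sub_right [NormedSpace ℝ E] (g : ℝ → E) (a : ℝ) :
    ∫ x in Ioi a, g (x - a) = ∫ x in Ioi 0, g x := by
  rw [← integral_indicator measurableSet_Ioi, ← integral_indicator measurableSet_Ioi,
    ← integral_sub_right_eq_self ((Ioi (0 : ℝ)).indicator g) a]
  congr 1
  ext x
  simp [indicator_apply, sub_pos]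

theorem IntegrableOn.comp_sub_right_Ioi {g : ℝ → E} (a : ℝ) (h : IntegrableOn g (Ioi 0)) :
    IntegrableOn (fun x => g (x - a)) (Ioi a) := by
  rw [← integrable_indicator_iff measurableSet_Ioi] at h ⊢
  refine (h.comp_sub_right a).congr (Filter.Eventually.of_forall fun x => ?_)
  simp [indicator_apply, sub_pos]

end Translation

section GammaIntegrals

variable {a r : ℝ}

theorem integrableOn_rpow_mul_exp_neg_mul_Ioi (ha : 0 < a) (hr : 0 < r) :
    IntegrableOn (fun t : ℝ => t ^ (a - 1) * exp (-(r * t))) (Ioi 0) := by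
  simpa [neg_mul] using integrableOn_rpow_mul_exp_neg_mul_rpow (by linarith) one_pos hr

theorem sub_rpow_mul_exp_neg_mul_eq (c θ : ℝ) :
    (θ - c) ^ (a - 1) * exp (-(r * θ))
      = exp (-(r * c)) * ((θ - c) ^ (a - 1) * exp (-(r * (θ - c)))) := by
  rw [mul_left_comm, ← exp_add]
  ring_nf

theorem integrableOn_sub_rpow_mul_exp_neg_mul_Ioi (c : ℝ) (ha : 0 < a) (hr : 0 < r) :
    IntegrableOn (fun θ : ℝ => (θ - c) ^ (a - 1) * exp (-(r * θ))) (Ioi c) := by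
  simp_rw [sub_rpow_mul_exp_neg_mul_eq c]
  exact IntegrableOn.comp_sub_right_Ioi c
    ((integrableOn_rpow_mul_exp_neg_mul_Ioi ha hr).const_mul _)

theorem integral_sub_rpow_mul_exp_neg_mul_Ioi (c : ℝ) (ha : 0 < a) (hr : 0 < r) :
    ∫ θ in Ioi c, (θ - c) ^ (a - 1) * exp (-(r * θ))
      = exp (-(r * c)) * ((1 / r) ^ a * Gamma a) := by
  simp_rw [sub_rpow_mul_exp_neg_mul_eq c]
  rw [integral_Ioi_comp_sub_right (fun t => exp (-(r * c)) * (t ^ (a - 1) * exp (-(r * t)))),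
    integral_const_mul, integral_rpow_mul_exp_neg_mul_Ioi ha hr]

end GammaIntegrals

theorem integral_exp_neg_mul_Ioi {θ : ℝ} (hθ : 0 < θ) (s : ℝ) :
    ∫ v in Ioi s, exp (-(θ * v)) = exp (-(θ * s)) / θ := by
  simpa [neg_mul, neg_div_neg_eq] using integral_exp_mul_Ioi (neg_neg_of_pos hθ) s

/-- `Γ(a, x)`. -/
noncomputable def upperIncompleteGamma (a x : ℝ) : ℝ :=
  ∫ t in Ioi x, t ^ (a - 1) * exp (-t)

theorem integral_rpow_mul_exp_neg_mul_Ioi_eq_upperIncompleteGamma {a r s : ℝ} (hr : 0 < r)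
    (hs : 0 ≤ s) :
    ∫ v in Ioi s, v ^ (a - 1) * exp (-(r * v)) = r ^ (-a) * upperIncompleteGamma a (r * s) := by
  rw [upperIncompleteGamma, ← integral_comp_mul_left_Ioi' _ s hr, smul_eq_mul,
    ← integral_const_mul, ← integral_const_mul]
  refine setIntegral_congr_fun measurableSet_Ioi fun v hv => ?_
  rw [mul_rpow hr.le (hs.trans hv.out.le), rpow_sub hr, rpow_one, rpow_neg hr.le]
  field_simp

theorem integrable_prod_of_nonneg {α β : Type*} [MeasurableSpace α] [MeasurableSpace β]
    {μ : Measure α} {ν : Measure β} [SFinite μ] [SFinite ν] {f : α → β → ℝ}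
    (hf : AEStronglyMeasurable (Function.uncurry f) (μ.prod ν))
    (hf_nonneg : ∀ᵐ y ∂ν, 0 ≤ᵐ[μ] fun x => f x y)
    (hf_sections : ∀ᵐ y ∂ν, Integrable (fun x => f x y) μ)
    (hf_integral : Integrable (fun y => ∫ x, f x y ∂μ) ν) :
    Integrable (Function.uncurry f) (μ.prod ν) := by
  refine (integrable_prod_iff' hf).mpr ⟨hf_sections, hf_integral.congr ?_⟩
  filter_upwards [hf_nonneg] with y hy
  exact integral_congr_ae (hy.mono fun x hx => (Real.norm_of_nonneg hx).symm)

theorem integral_exp_neg_mul_mul_sub_rpow_neg_div_Ioi {α l s : ℝ} (hα0 : 0 < α) (hα1 : α < 1)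
    (hl : 0 < l) (hs : 0 ≤ s) :
    ∫ θ in Ioi l, exp (-(s * θ)) * ((θ - l) ^ (-α) / θ)
      = Gamma (1 - α) * l ^ (-α) * upperIncompleteGamma α (l * s) := by
  have h1α : 0 < 1 - α := by linarith
  set F : ℝ → ℝ → ℝ := fun θ v => (θ - l) ^ ((1 - α) - 1) * exp (-(v * θ))
  have h_inner_v : ∀ θ ∈ Ioi l, exp (-(s * θ)) * ((θ - l) ^ (-α) / θ) = ∫ v in Ioi s, F θ v := by
    intro θ hθ
    simp only [F, mul_comm _ θ]
    rw [integral_const_mul, integral_exp_neg_mul_Ioi (hl.trans hθ), sub_sub_cancel_left]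
    ring
  have h_inner_θ : ∀ v ∈ Ioi s,
      ∫ θ in Ioi l, F θ v = Gamma (1 - α) * (v ^ (α - 1) * exp (-(l * v))) := by
    intro v hv
    have hv0 : 0 < v := hs.trans_lt hv
    rw [integral_sub_rpow_mul_exp_neg_mul_Ioi l h1α hv0, one_div, inv_rpow hv0.le,
      ← rpow_neg hv0.le, neg_sub]
    ring_nf
  have h_int : Integrable (Function.uncurry F)
      ((volume.restrict (Ioi l)).prod (volume.restrict (Ioi s))) := by
    refine integrable_prod_of_nonneg ?_ ?_ ?_ ?_
    · rw [Measure.prod_restrict]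
      refine ContinuousOn.aestronglyMeasurable ?_ (measurableSet_Ioi.prod measurableSet_Ioi)
      exact ContinuousOn.mul (ContinuousOn.rpow_const (by fun_prop)
        fun p hp => Or.inl (sub_pos.2 hp.1).ne') (by fun_prop)
    · exact Filter.Eventually.of_forall fun v => (ae_restrict_mem measurableSet_Ioi).mono
        fun θ hθ => mul_nonneg (rpow_nonneg (sub_pos.2 hθ).le _) (exp_pos _).le
    · filter_upwards [ae_restrict_mem measurableSet_Ioi] with v hv
      exact integrableOn_sub_rpow_mul_exp_neg_mul_Ioi l h1α (hs.trans_lt hv)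
    · refine IntegrableOn.congr_fun ?_ (fun v hv => (h_inner_θ v hv).symm) measurableSet_Ioi
      exact ((integrableOn_rpow_mul_exp_neg_mul_Ioi hα0 hl).mono_set
        (Ioi_subset_Ioi hs)).const_mul _
  calc ∫ θ in Ioi l, exp (-(s * θ)) * ((θ - l) ^ (-α) / θ)
      = ∫ θ in Ioi l, ∫ v in Ioi s, F θ v := setIntegral_congr_fun measurableSet_Ioi h_inner_v
    _ = ∫ v in Ioi s, ∫ θ in Ioi l, F θ v := integral_integral_swap h_int
    _ = ∫ v in Ioi s, Gamma (1 - α) * (v ^ (α - 1) * exp (-(l * v))) :=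
        setIntegral_congr_fun measurableSet_Ioi h_inner_θ
    _ = Gamma (1 - α) * l ^ (-α) * upperIncompleteGamma α (l * s) := by
        rw [integral_const_mul, integral_rpow_mul_exp_neg_mul_Ioi_eq_upperIncompleteGamma hl hs,
          mul_assoc]

/-- The Laplace transform of the mixing density
`f_Θ θ = λ^α (θ-λ)^(-α) / (θ Γ(1-α) Γ α)` on `θ ∈ (λ, ∞)` is
`L_Θ s = Γ(α, λ s)/Γ(α)`, where `Γ(α, x) = ∫_x^∞ t^(α-1) e^(-t) dt` is the
upper incomplete gamma function. -/
theorem laplace_of_gamma_mixing_density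
    (α l : ℝ) (hα0 : 0 < α) (hα1 : α < 1) (hl : 0 < l) :
    ∀ s : ℝ, 0 ≤ s →
      (∫ θ in Set.Ioi l,
          Real.exp (-(s * θ)) *
            (l ^ α * (θ - l) ^ (-α) / (θ * Real.Gamma (1 - α) * Real.Gamma α)))
        = (∫ t in Set.Ioi (l * s), t ^ (α - 1) * Real.exp (-t)) / Real.Gamma α := by
  intro s hs
  calc (∫ θ in Ioi l, exp (-(s * θ)) *
          (l ^ α * (θ - l) ^ (-α) / (θ * Gamma (1 - α) * Gamma α)))
      = ∫ θ in Ioi l, l ^ α / (Gamma (1 - α) * Gamma α) *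
          (exp (-(s * θ)) * ((θ - l) ^ (-α) / θ)) := by
        congr 1; ext θ; ring
    _ = l ^ α / (Gamma (1 - α) * Gamma α) *
          (Gamma (1 - α) * l ^ (-α) * upperIncompleteGamma α (l * s)) := by
        rw [integral_const_mul, integral_exp_neg_mul_mul_sub_rpow_neg_div_Ioi hα0 hα1 hl hs]
    _ = upperIncompleteGamma α (l * s) / Gamma α := by
        rw [rpow_neg hl.le]
        field_simp [(rpow_pos_of_pos hl α).ne', (Gamma_pos_of_pos (sub_pos.2 hα1)).ne']
end

section
/- With Lévy mixing density f_Θ(θ)=λ/(2√(πθ³))e^{-λ²/(4θ)}, the density of Sₙ under the exponential mixture model equals f_{Sₙ}(x) = λ^{n+1/2}/(2^{n-1/2}√π Γ(n)) · x^{n/2 − 3/4} K_{n−1/2}(λ√x) for x ≥ 0, where K_ν is the modified Bessel function of the third kind. -/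
/-!
Factoring the Lévy density leaves `θ^(p-1) e^(-xθ - λ²/(4θ))` with `p = n - 1/2`. The
substitution `θ = (λ / (2√x)) eᵘ` balances the two terms of the exponent into `-λ√x cosh u`,
and folding the resulting integral over `ℝ` onto `(0, ∞)` turns `e^(pu)` into `2 cosh (pu)`,
which gives `2 K_p(λ√x)`. At `x = 0` both sides vanish.
-/

open MeasureTheory Real

noncomputable def besselK (ν x : ℝ) : ℝ :=
  ∫ t in Set.Ioi (0 : ℝ), Real.exp (-(x * Real.cosh t)) * Real.cosh (ν * t)

open Set

lemma sq_div_four_le_cosh (u : ℝ) : u ^ 2 / 4 ≤ cosh u := by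
  rw [← cosh_abs, cosh_eq, ← sq_abs]
  nlinarith [quadratic_le_exp_of_nonneg (abs_nonneg u), exp_pos (-|u|), abs_nonneg u]

lemma integrable_exp_mul_sub_mul_cosh (p : ℝ) {c : ℝ} (hc : 0 < c) :
    Integrable fun u => exp (p * u - c * cosh u) := by
  refine ((integrable_exp_neg_mul_sq (b := c / 8) (by positivity)).const_mul
    (exp (2 * p ^ 2 / c))).mono' (by fun_prop) (Filter.Eventually.of_forall fun u => ?_)
  rw [norm_eq_abs, abs_exp, ← exp_add, exp_le_exp]
  have hquad : p * u - c * u ^ 2 / 8 ≤ 2 * p ^ 2 / c := by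
    rw [le_div_iff₀ hc]; nlinarith [sq_nonneg (c * u - 4 * p)]
  nlinarith [sq_div_four_le_cosh u]

lemma integral_exp_mul_sub_mul_cosh (p : ℝ) {c : ℝ} (hc : 0 < c) :
    ∫ u, exp (p * u - c * cosh u) = 2 * besselK p c := by
  have hint := integrable_exp_mul_sub_mul_cosh p hc
  rw [← intervalIntegral.integral_Iic_add_Ioi (b := 0) hint.integrableOn hint.integrableOn,
    ← neg_zero, ← integral_comp_neg_Ioi, neg_zero,
    ← integral_add hint.comp_neg.integrableOn hint.integrableOn,
    besselK, ← integral_const_mul]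
  refine setIntegral_congr_fun measurableSet_Ioi fun u _ => ?_
  simp only [cosh_neg, cosh_eq (p * u), mul_neg, sub_eq_add_neg, exp_add]
  ring

lemma integral_comp_exp {E : Type*} [NormedAddCommGroup E] [NormedSpace ℝ E] (g : ℝ → E) :
    ∫ u, exp u • g (exp u) = ∫ θ in Ioi 0, g θ := by
  simpa [abs_of_pos (exp_pos _)] using (integral_image_eq_integral_abs_deriv_smul
    MeasurableSet.univ (fun u _ => (hasDerivAt_exp u).hasDerivWithinAt)
    exp_injective.injOn g).symm

lemma integral_rpow_mul_exp_neg_mul_sub_div (p : ℝ) {a b : ℝ} (ha : 0 < a) (hb : 0 < b) :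
    ∫ θ in Ioi 0, θ ^ (p - 1) * exp (-(a * θ) - b / θ)
      = 2 * (b / a) ^ (p / 2) * besselK p (2 * √(a * b)) := by
  obtain ⟨α, hα, rfl⟩ : ∃ α, 0 < α ∧ α ^ 2 = a := ⟨√a, sqrt_pos.2 ha, sq_sqrt ha.le⟩
  obtain ⟨β, hβ, rfl⟩ : ∃ β, 0 < β ∧ β ^ 2 = b := ⟨√b, sqrt_pos.2 hb, sq_sqrt hb.le⟩
  have hs : 0 < β / α := div_pos hβ hα
  have hpow : ((β / α) ^ 2) ^ (p / 2) = (β / α) ^ p := by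
    rw [← rpow_natCast, ← rpow_mul hs.le]
    ring_nf
  rw [← mul_pow, sqrt_sq (mul_pos hα hβ).le, ← div_pow, hpow]
  have hsubst (u : ℝ) : exp (u + log (β / α)) • ((exp (u + log (β / α))) ^ (p - 1)
      * exp (-(α ^ 2 * exp (u + log (β / α))) - β ^ 2 / exp (u + log (β / α))))
        = (β / α) ^ p * exp (p * u - 2 * (α * β) * cosh u) := by
    have hθ : exp (u + log (β / α)) = β / α * exp u := by rw [exp_add, exp_log hs, mul_comm]
    have hθpos : 0 < β / α * exp u := by positivity
    rw [hθ, smul_eq_mul, rpow_sub_one hθpos.ne', ← mul_assoc, mul_div_cancel₀ _ hθpos.ne',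
      mul_rpow hs.le (exp_pos u).le, ← exp_mul, mul_assoc, ← exp_add, cosh_eq, exp_neg,
      mul_comm u p]
    congr 2
    field_simp
    ring
  calc _ = ∫ u, exp u • ((exp u) ^ (p - 1) * exp (-(α ^ 2 * exp u) - β ^ 2 / exp u)) :=
        (integral_comp_exp _).symm
    _ = ∫ u, exp (u + log (β / α)) • ((exp (u + log (β / α))) ^ (p - 1)
          * exp (-(α ^ 2 * exp (u + log (β / α))) - β ^ 2 / exp (u + log (β / α)))) :=
        (integral_add_right_eq_self _ _).symm
    _ = (β / α) ^ p * ∫ u, exp (p * u - 2 * (α * β) * cosh u) := by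
        simp only [hsubst, integral_const_mul]
    _ = _ := by
        rw [integral_exp_mul_sub_mul_cosh p (by positivity)]
        ring_nf

lemma integral_rpow_mul_exp_neg_mul_sub_sq_div (p : ℝ) {l x : ℝ} (hl : 0 < l) (hx : 0 < x) :
    ∫ θ in Ioi 0, θ ^ (p - 1) * exp (-(x * θ) - l ^ 2 / 4 / θ)
      = 2 * (l / 2) ^ p / x ^ (p / 2) * besselK p (l * √x) := by
  have harg : 2 * √(x * (l ^ 2 / 4)) = l * √x := by
    rw [sqrt_mul hx.le, show l ^ 2 / 4 = (l / 2) ^ 2 by ring, sqrt_sq (by positivity)]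
    ring
  have hratio : (l ^ 2 / 4 / x) ^ (p / 2) = (l / 2) ^ p / x ^ (p / 2) := by
    rw [div_rpow (by positivity) hx.le, show l ^ 2 / 4 = (l / 2) ^ (2 : ℝ) by norm_num; ring,
      ← rpow_mul (by positivity), mul_div_cancel₀ _ two_ne_zero]
  rw [integral_rpow_mul_exp_neg_mul_sub_div p hx (by positivity), harg, hratio, mul_div_assoc]

noncomputable def levyDensity (l θ : ℝ) : ℝ :=
  l / (2 * √(π * θ ^ 3)) * exp (-(l ^ 2 / (4 * θ)))

lemma levyDensity_eq_rpow (l : ℝ) {θ : ℝ} (hθ : 0 < θ) :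
    levyDensity l θ = l / (2 * √π) * θ ^ (-(3 / 2) : ℝ) * exp (-(l ^ 2 / 4) / θ) := by
  have hcube : √(θ ^ 3) = θ ^ (3 / 2 : ℝ) := by
    rw [sqrt_eq_rpow, ← rpow_natCast, ← rpow_mul hθ.le]
    norm_num
  rw [levyDensity, sqrt_mul pi_pos.le, hcube, rpow_neg hθ.le, neg_div, div_div]
  field_simp

lemma integral_pow_mul_exp_mul_levyDensity (l x : ℝ) (n : ℕ) :
    ∫ θ in Ioi 0, θ ^ n * exp (-(x * θ)) * levyDensity l θ
      = l / (2 * √π) *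
          ∫ θ in Ioi 0, θ ^ ((n : ℝ) - 1 / 2 - 1) * exp (-(x * θ) - l ^ 2 / 4 / θ) := by
  rw [← integral_const_mul]
  refine setIntegral_congr_fun measurableSet_Ioi fun θ (hθ : 0 < θ) => ?_
  rw [levyDensity_eq_rpow l hθ, ← rpow_natCast, sub_eq_add_neg _ (l ^ 2 / 4 / θ), exp_add,
    show (n : ℝ) - 1 / 2 - 1 = n + -(3 / 2) by ring, rpow_add hθ, neg_div]
  ring

lemma not_integrableOn_rpow_mul_exp_neg_div {s b : ℝ} (hs : -1 ≤ s) (hb : 0 ≤ b) :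
    ¬ IntegrableOn (fun θ => θ ^ s * exp (-b / θ)) (Ioi 0) := by
  intro hint
  suffices IntegrableOn (fun θ : ℝ => θ ^ s) (Ioi 1) by
    rw [integrableOn_Ioi_rpow_iff zero_lt_one] at this
    linarith
  refine ((hint.mono_set (Ioi_subset_Ioi zero_le_one)).const_mul (exp b)).mono'
    (by fun_prop) ?_
  filter_upwards [ae_restrict_mem measurableSet_Ioi] with θ (hθ : 1 < θ)
  have hθ0 : 0 < θ := zero_lt_one.trans hθ
  rw [norm_eq_abs, abs_of_pos (rpow_pos_of_pos hθ0 s), mul_left_comm, ← exp_add]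
  refine le_mul_of_one_le_right (rpow_pos_of_pos hθ0 s).le (one_le_exp ?_)
  rw [neg_div, ← sub_eq_add_neg, sub_nonneg]
  exact div_le_self hb hθ.le

/-- With the Lévy mixing density `f_Θ θ = λ/(2√(π θ³)) e^(-λ²/(4θ))`, the density
of `Sₙ` under the exponential mixture model,
`f_{Sₙ} x = (x^(n-1)/Γ n) ∫₀^∞ θⁿ e^(-xθ) f_Θ θ dθ`, equals
`λ^(n+1/2) / (2^(n-1/2) √π Γ n) · x^(n/2 - 3/4) K_(n-1/2) (λ √x)` for `x ≥ 0`. -/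
theorem aggregated_density_levy_mixing_bessel
    (l : ℝ) (hl : 0 < l) (n : ℕ) (hn : 1 ≤ n) :
    ∀ x : ℝ, 0 ≤ x →
      x ^ (n - 1) / Real.Gamma n *
          ∫ θ in Set.Ioi (0 : ℝ),
            θ ^ n * Real.exp (-(x * θ)) *
              (l / (2 * Real.sqrt (Real.pi * θ ^ 3)) * Real.exp (-(l ^ 2 / (4 * θ))))
        = l ^ ((n : ℝ) + 1 / 2) /
            (2 ^ ((n : ℝ) - 1 / 2) * Real.sqrt Real.pi * Real.Gamma n) *
            x ^ ((n : ℝ) / 2 - 3 / 4) * besselK ((n : ℝ) - 1 / 2) (l * Real.sqrt x) := by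
  intro x hx
  simp only [← levyDensity.eq_1, integral_pow_mul_exp_mul_levyDensity l x n]
  rcases hx.eq_or_lt with rfl | hx
  · have hexp : (n : ℝ) / 2 - 3 / 4 ≠ 0 := by
      intro h
      have : (2 * n : ℕ) = 3 := by exact_mod_cast (by linarith : (2 * n : ℝ) = 3)
      omega
    rw [zero_rpow hexp, mul_zero, zero_mul]
    obtain rfl | hn := hn.eq_or_lt
    · -- `n = 1`: `θ f_Θ(θ)` is not integrable, so the integral is the junk value `0`,
      -- and so is `0 ^ (-1/4)` on the right.
      rw [integral_undef, mul_zero, mul_zero]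
      refine fun h => not_integrableOn_rpow_mul_exp_neg_div (s := -1 / 2) (b := l ^ 2 / 4)
        (by norm_num) (by positivity) (h.congr (.of_forall fun θ => ?_))
      norm_num [neg_div]
    · simp [zero_pow (by omega : n - 1 ≠ 0)]
  · rw [integral_rpow_mul_exp_neg_mul_sub_sq_div _ hl hx]
    have hxpow : x ^ (n - 1) = x ^ ((n : ℝ) / 2 - 3 / 4) * x ^ (((n : ℝ) - 1 / 2) / 2) := by
      rw [← rpow_add hx, ← rpow_natCast, Nat.cast_sub hn]
      ring_nf
    rw [hxpow, show (n : ℝ) + 1 / 2 = n - 1 / 2 + 1 by ring, rpow_add_one hl.ne',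
      div_rpow hl.le zero_le_two]
    field_simp
end
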